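/- Let v(t) = max(|u₁(t)|, |u₂(t)|) where u is continuous of locally bounded variation with u(0) = 0 and satisfies (u₁+u₂) du₂ ≤ 0 and (u₁-u₂) du₁ ≤ 0. Then on the sector N = {u₂ > 0, -u₂ < u₁ ≤ u₂} one has v = u₂ and the restriction of dv = du₂ to {t : u(t) ∈ N} is a non-positive measure; analogous statements hold on the sectors E = {u₁ > 0, -u₁ < u₂ ≤ u₁} (v = u₁, dv = du₁ ≤ 0 there), S = {u₂ < 0, u₂ < u₁ ≤ -u₂} (v = -u₂, dv = -du₂ ≤ 0), and W = {u₁ < 0, u₁ < u₂ ≤ -u₁} (v = -u₁, dv = -du₁ ≤ 0). -/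

import Mathlib

/-!
On `N` and `W` the weights `u₁ + u₂` and `u₂ - u₁` are positive, and a comparison of the weighted
measures `w • dm ≤ w • dm̄` on all subsets survives division by a positive continuous `w`. On `E`
and `S` the weight vanishes on one boundary ray. There `u₁ ∓ u₂ = 0`, and the Stieltjes measure of
a continuous monotone function on a compact set depends only on its values on that set, so on the
ray `du₁ = ±du₂`, where the other hypothesis applies with a positive weight.
-/

open Set MeasureTheory

theorem IsCompact.exists_finset_pairwiseDisjoint_isPreconnected_isOpen_cover
    {X : Type*} [TopologicalSpace X] [LocallyConnectedSpace X] {K V : Set X}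
    (hK : IsCompact K) (hV : IsOpen V) (hKV : K ⊆ V) :
    ∃ 𝒞 : Finset (Set X), (𝒞 : Set (Set X)).PairwiseDisjoint id ∧ K ⊆ ⋃ C ∈ 𝒞, C ∧
      ∀ C ∈ 𝒞, IsOpen C ∧ IsPreconnected C ∧ C ⊆ V := by
  classical
  obtain ⟨T, -, hT, hKT⟩ := hK.elim_finite_subcover_image
    (fun x _ => hV.connectedComponentIn)
    (fun x hx => mem_biUnion hx (mem_connectedComponentIn (hKV hx)))
  refine ⟨hT.toFinset.image (connectedComponentIn V), ?_, by simpa using hKT, ?_⟩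
  · simp only [Finset.coe_image, Set.Finite.coe_toFinset]
    rintro _ ⟨x, -, rfl⟩ _ ⟨y, -, rfl⟩ hxy
    refine Set.disjoint_left.2 fun z hzx hzy => hxy ?_
    rw [connectedComponentIn_eq hzx, connectedComponentIn_eq hzy]
  · simp only [Finset.mem_image]
    rintro _ ⟨x, -, rfl⟩
    exact ⟨hV.connectedComponentIn, isPreconnected_connectedComponentIn,
      connectedComponentIn_subset V x⟩

theorem IsCompact.inter_of_pairwiseDisjoint_isOpen_cover {X : Type*} [TopologicalSpace X]
    {K : Set X} (hK : IsCompact K) {𝒞 : Set (Set X)} (hdisj : 𝒞.PairwiseDisjoint id)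
    (hopen : ∀ C ∈ 𝒞, IsOpen C) (hcover : K ⊆ ⋃ C ∈ 𝒞, C) {C : Set X} (hC : C ∈ 𝒞) :
    IsCompact (K ∩ C) := by
  have hKC : K ∩ C = K \ ⋃ C' ∈ 𝒞 \ {C}, C' := by
    refine Subset.antisymm (fun x ⟨hxK, hxC⟩ => ⟨hxK, ?_⟩) fun x ⟨hxK, hx⟩ => ⟨hxK, ?_⟩
    · simp only [mem_iUnion₂, not_exists]
      exact fun C' hC' hxC' => Set.disjoint_left.1 (hdisj hC'.1 hC hC'.2) hxC' hxC
    · obtain ⟨C', hC', hxC'⟩ := mem_iUnion₂.1 (hcover hxK)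
      by_contra hxC
      exact hx (mem_iUnion₂.2 ⟨C', ⟨hC', fun h => hxC (h ▸ hxC')⟩, hxC'⟩)
  rw [hKC]
  exact hK.diff (isOpen_biUnion fun C' hC' => hopen C' hC'.1)

namespace StieltjesFunction

variable {F G : StieltjesFunction ℝ}

theorem measure_Icc_of_continuous (hF : Continuous F) (a b : ℝ) :
    F.measure (Icc a b) = ENNReal.ofReal (F b - F a) := by
  rw [F.measure_Icc, leftLim_eq_of_tendsto ((hF.tendsto a).mono_left nhdsWithin_le_nhds)]

theorem measure_le_of_eqOn_of_ordConnected (hF : Continuous F) (hG : Continuous G)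
    {L C : Set ℝ} (hL : IsCompact L) (hC : C.OrdConnected) (hLC : L ⊆ C) (hFG : EqOn F G L) :
    F.measure L ≤ G.measure C := by
  rcases L.eq_empty_or_nonempty with rfl | hne
  · simp
  have ha := hL.sInf_mem hne
  have hb := hL.sSup_mem hne
  calc F.measure L ≤ F.measure (Icc (sInf L) (sSup L)) :=
        measure_mono fun x hx => ⟨csInf_le hL.bddBelow hx, le_csSup hL.bddAbove hx⟩
    _ = G.measure (Icc (sInf L) (sSup L)) := by
        rw [measure_Icc_of_continuous hF, measure_Icc_of_continuous hG, hFG ha, hFG hb]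
    _ ≤ G.measure C := measure_mono (hC.out (hLC ha) (hLC hb))

-- Cover `K` by finitely many components of an open neighbourhood: each piece of `K` lies between
-- two of its own points, where `F` and `G` agree.
theorem measure_le_of_eqOn (hF : Continuous F) (hG : Continuous G) {K : Set ℝ}
    (hK : IsCompact K) (hFG : EqOn F G K) : F.measure K ≤ G.measure K := by
  refine le_of_forall_gt fun r hr => ?_
  obtain ⟨V, hKV, hV, hVr⟩ := exists_isOpen_lt_of_lt K r hr
  obtain ⟨𝒞, hdisj, hcover, h𝒞⟩ :=
    hK.exists_finset_pairwiseDisjoint_isPreconnected_isOpen_cover hV hKV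
  calc F.measure K ≤ ∑ C ∈ 𝒞, F.measure (K ∩ C) := by
        refine (measure_mono fun x hx => ?_).trans (measure_biUnion_finset_le 𝒞 _)
        obtain ⟨C, hC, hxC⟩ := mem_iUnion₂.1 (hcover hx)
        exact mem_iUnion₂.2 ⟨C, hC, hx, hxC⟩
    _ ≤ ∑ C ∈ 𝒞, G.measure C := Finset.sum_le_sum fun C hC =>
        measure_le_of_eqOn_of_ordConnected hF hG
          (hK.inter_of_pairwiseDisjoint_isOpen_cover hdisj (fun C hC => (h𝒞 C hC).1)
            (by simpa using hcover) hC)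
          (h𝒞 C hC).2.1.ordConnected inter_subset_right (hFG.mono inter_subset_left)
    _ = G.measure (⋃ C ∈ 𝒞, C) :=
        (measure_biUnion_finset hdisj fun C hC => (h𝒞 C hC).1.measurableSet).symm
    _ ≤ G.measure V := measure_mono (iUnion₂_subset fun C hC => (h𝒞 C hC).2.2)
    _ < r := hVr

variable {F' G' : StieltjesFunction ℝ}

theorem measure_le_of_sub_eqOn (hF : Continuous F) (hG : Continuous G) (hF' : Continuous F')
    (hG' : Continuous G') {A : Set ℝ} (hA : MeasurableSet A)
    (hsub : ∀ t ∈ A, F t - G t = F' t - G' t)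
    (hle : ∀ K ⊆ A, IsCompact K → F'.measure K ≤ G'.measure K) :
    F.measure A ≤ G.measure A := by
  rw [hA.measure_eq_iSup_isCompact]
  refine iSup₂_le fun K hKA => iSup_le fun hK => ?_
  have hsum : F.measure K + G'.measure K ≤ G.measure K + G'.measure K :=
    calc F.measure K + G'.measure K = (F + G').measure K := by rw [measure_add]; rfl
      _ ≤ (G + F').measure K := measure_le_of_eqOn (hF.add hG') (hG.add hF') hK
          fun t ht => by simp only [add_apply]; linarith [hsub t (hKA ht)]
      _ = G.measure K + F'.measure K := by rw [measure_add]; rfl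
      _ ≤ G.measure K + G'.measure K := add_le_add_right (hle K hKA hK) _
  exact ((ENNReal.add_le_add_iff_right hK.measure_lt_top.ne).1 hsum).trans
    (measure_mono hKA)

end StieltjesFunction

section Weighted

variable {μ ν : Measure ℝ} [IsLocallyFiniteMeasure μ] [IsLocallyFiniteMeasure ν] {f : ℝ → ℝ}
  {B : Set ℝ}

theorem withDensity_restrict_le_of_setIntegral_le (hf : Continuous f) (hB : MeasurableSet B)
    (hnonneg : ∀ t ∈ B, 0 ≤ f t)
    (h : ∀ C, MeasurableSet C → C ⊆ B → ∫ t in C, f t ∂μ ≤ ∫ t in C, f t ∂ν) :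
    (μ.restrict B).withDensity (fun t => ENNReal.ofReal (f t))
      ≤ (ν.restrict B).withDensity (fun t => ENNReal.ofReal (f t)) := by
  have hbounded : ∀ C, MeasurableSet C → C ⊆ B → ∀ n : ℕ,
      ∫⁻ t in C ∩ Metric.closedBall 0 n, ENNReal.ofReal (f t) ∂μ
        ≤ ∫⁻ t in C ∩ Metric.closedBall 0 n, ENNReal.ofReal (f t) ∂ν := by
    intro C hC hCB n
    have hCn : MeasurableSet (C ∩ Metric.closedBall 0 n) := hC.inter measurableSet_closedBall
    have hint : ∀ κ : Measure ℝ, [IsLocallyFiniteMeasure κ] →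
        ENNReal.ofReal (∫ t in C ∩ Metric.closedBall 0 n, f t ∂κ)
          = ∫⁻ t in C ∩ Metric.closedBall 0 n, ENNReal.ofReal (f t) ∂κ := fun κ _ =>
      ofReal_integral_eq_lintegral_ofReal
        ((hf.continuousOn.integrableOn_compact (isCompact_closedBall 0 n)).mono_set
          inter_subset_right)
        (ae_restrict_of_forall_mem hCn fun t ht => hnonneg t (hCB ht.1))
    rw [← hint μ, ← hint ν]
    exact ENNReal.ofReal_le_ofReal (h _ hCn (inter_subset_left.trans hCB))
  refine Measure.le_iff.2 fun s hs => ?_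
  have hmono : Monotone fun n : ℕ => s ∩ B ∩ Metric.closedBall 0 n := fun n k hnk =>
    inter_subset_inter_right _ (Metric.closedBall_subset_closedBall (by exact_mod_cast hnk))
  have hunion : ⋃ n : ℕ, s ∩ B ∩ Metric.closedBall 0 n = s ∩ B := by
    rw [← inter_iUnion, Metric.iUnion_closedBall_nat, inter_univ]
  rw [withDensity_apply _ hs, withDensity_apply _ hs, Measure.restrict_restrict hs,
    Measure.restrict_restrict hs, ← hunion,
    setLIntegral_iUnion_of_directed _ hmono.directed_le,
    setLIntegral_iUnion_of_directed _ hmono.directed_le]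
  exact iSup_mono (hbounded _ (hs.inter hB) inter_subset_right)

theorem measure_le_of_setIntegral_le (hf : Continuous f) (hB : MeasurableSet B)
    (hpos : ∀ t ∈ B, 0 < f t)
    (h : ∀ C, MeasurableSet C → C ⊆ B → ∫ t in C, f t ∂μ ≤ ∫ t in C, f t ∂ν) :
    μ B ≤ ν B := by
  set g : ℝ → ENNReal := fun t => ENNReal.ofReal (f t)
  have hg : Measurable g := ENNReal.measurable_ofReal.comp hf.measurable
  have hrecover : ∀ κ : Measure ℝ,
      κ B = ∫⁻ t, (g t)⁻¹ ∂(κ.restrict B).withDensity g := fun κ => by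
    rw [← setLIntegral_univ, ← withDensity_apply _ MeasurableSet.univ,
      withDensity_inv_same hg (ae_restrict_of_forall_mem hB fun t ht => ?_)
        (ae_of_all _ fun t => ENNReal.ofReal_ne_top), Measure.restrict_apply_univ]
    exact ENNReal.ofReal_pos.2 (hpos t ht) |>.ne'
  rw [hrecover μ, hrecover ν]
  exact lintegral_mono' (withDensity_restrict_le_of_setIntegral_le hf hB
    (fun t ht => (hpos t ht).le) h) le_rfl

theorem measure_le_of_setIntegral_le_of_nonneg (hf : Continuous f) (hB : MeasurableSet B)
    (hnonneg : ∀ t ∈ B, 0 ≤ f t)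
    (h : ∀ C, MeasurableSet C → C ⊆ B → ∫ t in C, f t ∂μ ≤ ∫ t in C, f t ∂ν)
    (hzero : μ (B ∩ {t | f t = 0}) ≤ ν (B ∩ {t | f t = 0})) :
    μ B ≤ ν B := by
  have hZ : MeasurableSet {t | f t = 0} := measurableSet_eq_fun hf.measurable measurable_const
  rw [← measure_inter_add_sdiff B hZ, ← measure_inter_add_sdiff (μ := ν) B hZ]
  refine add_le_add hzero (measure_le_of_setIntegral_le hf (hB.diff hZ) ?_ ?_)
  · exact fun t ht => (hnonneg t ht.1).lt_of_ne' ht.2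
  · exact fun C hC hCB => h C hC (hCB.trans sdiff_subset)

end Weighted

section Sectors

variable {u : ℝ → Fin 2 → ℝ} {B : Set ℝ}

theorem measure_le_of_subset_north {μ ν : Measure ℝ} [IsLocallyFiniteMeasure μ]
    [IsLocallyFiniteMeasure ν] (hu : ∀ j, Continuous fun t => u t j)
    (h2 : ∀ B : Set ℝ, MeasurableSet B → B ⊆ Ici 0 →
      ∫ t in B, (u t 0 + u t 1) ∂μ ≤ ∫ t in B, (u t 0 + u t 1) ∂ν)
    (hB : MeasurableSet B)
    (hBN : B ⊆ {t ∈ Ici (0:ℝ) | 0 < u t 1 ∧ -u t 1 < u t 0 ∧ u t 0 ≤ u t 1}) :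
    μ B ≤ ν B :=
  measure_le_of_setIntegral_le (f := fun t => u t 0 + u t 1) ((hu 0).add (hu 1)) hB
    (fun t ht => by linarith [(hBN ht).2.2.1]) fun C hC hCB => h2 C hC fun t ht => (hBN (hCB ht)).1

theorem measure_le_of_subset_west {μ ν : Measure ℝ} [IsLocallyFiniteMeasure μ]
    [IsLocallyFiniteMeasure ν] (hu : ∀ j, Continuous fun t => u t j)
    (h1 : ∀ B : Set ℝ, MeasurableSet B → B ⊆ Ici 0 →
      ∫ t in B, (u t 0 - u t 1) ∂μ ≤ ∫ t in B, (u t 0 - u t 1) ∂ν)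
    (hB : MeasurableSet B)
    (hBW : B ⊆ {t ∈ Ici (0:ℝ) | u t 0 < 0 ∧ u t 0 < u t 1 ∧ u t 1 ≤ -u t 0}) :
    ν B ≤ μ B :=
  measure_le_of_setIntegral_le (f := fun t => -(u t 0 - u t 1)) ((hu 0).sub (hu 1)).neg hB
    (fun t ht => by linarith [(hBW ht).2.2.1]) fun C hC hCB => by
      simpa only [integral_neg, neg_le_neg_iff] using h1 C hC fun t ht => (hBW (hCB ht)).1

variable {m mbar : Fin 2 → StieltjesFunction ℝ}

theorem measure_le_of_subset_east (hmc : ∀ j, Continuous (m j))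
    (hmbarc : ∀ j, Continuous (mbar j)) (hdecomp : ∀ t, ∀ j, u t j = m j t - mbar j t)
    (h2 : ∀ B : Set ℝ, MeasurableSet B → B ⊆ Ici 0 →
      ∫ t in B, (u t 0 + u t 1) ∂(m 1).measure ≤ ∫ t in B, (u t 0 + u t 1) ∂(mbar 1).measure)
    (h1 : ∀ B : Set ℝ, MeasurableSet B → B ⊆ Ici 0 →
      ∫ t in B, (u t 0 - u t 1) ∂(m 0).measure ≤ ∫ t in B, (u t 0 - u t 1) ∂(mbar 0).measure)
    (hB : MeasurableSet B)
    (hBE : B ⊆ {t ∈ Ici (0:ℝ) | 0 < u t 0 ∧ -u t 0 < u t 1 ∧ u t 1 ≤ u t 0}) :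
    (m 0).measure B ≤ (mbar 0).measure B := by
  have hu : ∀ j, Continuous fun t => u t j := fun j =>
    ((hmc j).sub (hmbarc j)).congr fun t => (hdecomp t j).symm
  -- On the diagonal `u₁ = u₂` the weight vanishes, but there `du₁ = du₂`, and it lies in `N`.
  refine measure_le_of_setIntegral_le_of_nonneg (f := fun t => u t 0 - u t 1) ((hu 0).sub (hu 1))
    hB (fun t ht => sub_nonneg.2 (hBE ht).2.2.2)
    (fun C hC hCB => h1 C hC fun t ht => (hBE (hCB ht)).1)
    (StieltjesFunction.measure_le_of_sub_eqOn (hmc 0) (hmbarc 0) (hmc 1) (hmbarc 1)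
      (hB.inter (isClosed_eq ((hu 0).sub (hu 1)) continuous_const).measurableSet) ?_ ?_)
  · rintro t ⟨-, ht⟩
    linarith [hdecomp t 0, hdecomp t 1, show u t 0 - u t 1 = 0 from ht]
  · refine fun K hKA hK => measure_le_of_subset_north hu h2 hK.isClosed.measurableSet fun t ht => ?_
    obtain ⟨ht0, h0, h, h'⟩ := hBE (hKA ht).1
    have hdiag : u t 0 - u t 1 = 0 := (hKA ht).2
    exact ⟨ht0, by linarith, by linarith, by linarith⟩

theorem measure_le_of_subset_south (hmc : ∀ j, Continuous (m j))
    (hmbarc : ∀ j, Continuous (mbar j)) (hdecomp : ∀ t, ∀ j, u t j = m j t - mbar j t)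
    (h2 : ∀ B : Set ℝ, MeasurableSet B → B ⊆ Ici 0 →
      ∫ t in B, (u t 0 + u t 1) ∂(m 1).measure ≤ ∫ t in B, (u t 0 + u t 1) ∂(mbar 1).measure)
    (h1 : ∀ B : Set ℝ, MeasurableSet B → B ⊆ Ici 0 →
      ∫ t in B, (u t 0 - u t 1) ∂(m 0).measure ≤ ∫ t in B, (u t 0 - u t 1) ∂(mbar 0).measure)
    (hB : MeasurableSet B)
    (hBS : B ⊆ {t ∈ Ici (0:ℝ) | u t 1 < 0 ∧ u t 1 < u t 0 ∧ u t 0 ≤ -u t 1}) :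
    (mbar 1).measure B ≤ (m 1).measure B := by
  have hu : ∀ j, Continuous fun t => u t j := fun j =>
    ((hmc j).sub (hmbarc j)).congr fun t => (hdecomp t j).symm
  -- On the antidiagonal `u₁ = -u₂` the weight vanishes, but there `du₂ = -du₁` and `u₁ - u₂ > 0`.
  refine measure_le_of_setIntegral_le_of_nonneg (f := fun t => -(u t 0 + u t 1))
    ((hu 0).add (hu 1)).neg hB (fun t ht => by linarith [(hBS ht).2.2.2]) (fun C hC hCB => ?_)
    (StieltjesFunction.measure_le_of_sub_eqOn (hmbarc 1) (hmc 1) (hmc 0) (hmbarc 0)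
      (hB.inter (isClosed_eq ((hu 0).add (hu 1)).neg continuous_const).measurableSet) ?_ ?_)
  · simpa only [integral_neg, neg_le_neg_iff] using h2 C hC fun t ht => (hBS (hCB ht)).1
  · rintro t ⟨-, ht⟩
    linarith [hdecomp t 0, hdecomp t 1, show -(u t 0 + u t 1) = 0 from ht]
  · refine fun K hKA hK => measure_le_of_setIntegral_le (f := fun t => u t 0 - u t 1)
      ((hu 0).sub (hu 1)) hK.isClosed.measurableSet (fun t ht => ?_)
      fun C hC hCK => h1 C hC fun t ht => (hBS (hKA (hCK ht)).1).1
    obtain ⟨-, h0, -, -⟩ := hBS (hKA ht).1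
    have hdiag : -(u t 0 + u t 1) = 0 := (hKA ht).2
    linarith

end Sectors

theorem sector_analysis
    (u : ℝ → Fin 2 → ℝ) (v : ℝ → ℝ) (m mbar : Fin 2 → StieltjesFunction ℝ)
    (hmc : ∀ j, Continuous (m j)) (hmbarc : ∀ j, Continuous (mbar j))
    (hdecomp : ∀ t, ∀ j, u t j = m j t - mbar j t)
    (hv : ∀ t, v t = max |u t 0| |u t 1|)
    (h2 : ∀ B : Set ℝ, MeasurableSet B → B ⊆ Set.Ici 0 →
      (∫ t in B, (u t 0 + u t 1) ∂(m 1).measure)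
        ≤ ∫ t in B, (u t 0 + u t 1) ∂(mbar 1).measure)
    (h1 : ∀ B : Set ℝ, MeasurableSet B → B ⊆ Set.Ici 0 →
      (∫ t in B, (u t 0 - u t 1) ∂(m 0).measure)
        ≤ ∫ t in B, (u t 0 - u t 1) ∂(mbar 0).measure) :
    -- North sector: v = u₂ and dv = du₂ ≤ 0 there
    ((∀ t ∈ Set.Ici (0:ℝ),
        (0 < u t 1 ∧ -u t 1 < u t 0 ∧ u t 0 ≤ u t 1) → v t = u t 1)
      ∧ ∀ B : Set ℝ, MeasurableSet B →
          B ⊆ {t ∈ Set.Ici (0:ℝ) | 0 < u t 1 ∧ -u t 1 < u t 0 ∧ u t 0 ≤ u t 1} →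
          (m 1).measure B ≤ (mbar 1).measure B)
    -- East sector: v = u₁ and dv = du₁ ≤ 0 there
    ∧ ((∀ t ∈ Set.Ici (0:ℝ),
        (0 < u t 0 ∧ -u t 0 < u t 1 ∧ u t 1 ≤ u t 0) → v t = u t 0)
      ∧ ∀ B : Set ℝ, MeasurableSet B →
          B ⊆ {t ∈ Set.Ici (0:ℝ) | 0 < u t 0 ∧ -u t 0 < u t 1 ∧ u t 1 ≤ u t 0} →
          (m 0).measure B ≤ (mbar 0).measure B)
    -- South sector: v = -u₂ and dv = -du₂ ≤ 0 there
    ∧ ((∀ t ∈ Set.Ici (0:ℝ),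
        (u t 1 < 0 ∧ u t 1 < u t 0 ∧ u t 0 ≤ -u t 1) → v t = -u t 1)
      ∧ ∀ B : Set ℝ, MeasurableSet B →
          B ⊆ {t ∈ Set.Ici (0:ℝ) | u t 1 < 0 ∧ u t 1 < u t 0 ∧ u t 0 ≤ -u t 1} →
          (mbar 1).measure B ≤ (m 1).measure B)
    -- West sector: v = -u₁ and dv = -du₁ ≤ 0 there
    ∧ ((∀ t ∈ Set.Ici (0:ℝ),
        (u t 0 < 0 ∧ u t 0 < u t 1 ∧ u t 1 ≤ -u t 0) → v t = -u t 0)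
      ∧ ∀ B : Set ℝ, MeasurableSet B →
          B ⊆ {t ∈ Set.Ici (0:ℝ) | u t 0 < 0 ∧ u t 0 < u t 1 ∧ u t 1 ≤ -u t 0} →
          (mbar 0).measure B ≤ (m 0).measure B) := by
  have hu : ∀ j, Continuous fun t => u t j := fun j =>
    ((hmc j).sub (hmbarc j)).congr fun t => (hdecomp t j).symm
  refine ⟨⟨fun t _ ⟨h0, h, h'⟩ => ?_, fun B hB => measure_le_of_subset_north hu h2 hB⟩,
    ⟨fun t _ ⟨h0, h, h'⟩ => ?_, fun B hB => measure_le_of_subset_east hmc hmbarc hdecomp h2 h1 hB⟩,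
    ⟨fun t _ ⟨h0, h, h'⟩ => ?_, fun B hB => measure_le_of_subset_south hmc hmbarc hdecomp h2 h1 hB⟩,
    ⟨fun t _ ⟨h0, h, h'⟩ => ?_, fun B hB => measure_le_of_subset_west hu h1 hB⟩⟩
  · rw [hv, abs_of_pos h0, max_eq_right (abs_le.2 ⟨by linarith, h'⟩)]
  · rw [hv, abs_of_pos h0, max_eq_left (abs_le.2 ⟨by linarith, h'⟩)]
  · rw [hv, abs_of_neg h0, max_eq_right (abs_le.2 ⟨by linarith, h'⟩)]
  · rw [hv, abs_of_neg h0, max_eq_left (abs_le.2 ⟨by linarith, h'⟩)]
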